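/- Suppose ν is even, P = Pᵀ, and C is symmetric positive definite. Define A_{ν/2,ν/2}(z) := (P^{ν/2} ⊗ I_n) x⋆((P^{ν/2} ⊗ I_n) z). Let (α_k)_{k≥1} satisfy α_k ∈ (0,1) for all k, lim_{k→∞} α_k = 0 and Σ_{k=1}^∞ α_k = ∞. Then for any initial vector z_0 ∈ ℝ^{Nn}, the Mann iteration z_{k+1} := (1−α_k) z_k + α_k A_{ν/2,ν/2}(z_k) is such that the sequence a_k := (P^{ν/2} ⊗ I_n) z_k converges as k → ∞ to a fixed point of A_ν. (Theorem 3, statement 4.) -/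

import Mathlib

open Matrix Filter Topology Finset
open scoped Kronecker

noncomputable section

/-- Euclidean norm of a finitely-indexed real vector. -/
def eunorm {ι : Type*} [Fintype ι] (x : ι → ℝ) : ℝ := Real.sqrt (x ⬝ᵥ x)

/-- `S`-weighted norm `‖x‖_S = √(xᵀ S x)`. -/
def wnorm {ι : Type*} [Fintype ι] (S : Matrix ι ι ℝ) (x : ι → ℝ) : ℝ :=
  Real.sqrt (x ⬝ᵥ S.mulVec x)

/-- Quadratic cost `J(x,z) = q·xᵀQx + 2(Cz+c)ᵀx`. -/
def cost {n : ℕ} (Q C : Matrix (Fin n) (Fin n) ℝ) (qi : ℝ) (ci : Fin n → ℝ)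
    (x z : Fin n → ℝ) : ℝ :=
  qi * (x ⬝ᵥ Q.mulVec x) + 2 * ((C.mulVec z + ci) ⬝ᵥ x)

/-- `xst` is the optimal-response map: for every `z`, `xst z` minimizes the cost over `X`. -/
def IsOptResp {n : ℕ} (X : Set (Fin n → ℝ)) (Q C : Matrix (Fin n) (Fin n) ℝ)
    (qi : ℝ) (ci : Fin n → ℝ) (xst : (Fin n → ℝ) → (Fin n → ℝ)) : Prop :=
  ∀ z, xst z ∈ X ∧ ∀ y ∈ X, cost Q C qi ci (xst z) z ≤ cost Q C qi ci y z

/-- Stacked optimal responses `x⋆(z) = (x^{1⋆}(z^1);…;x^{N⋆}(z^N))`. -/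
def extMap {n N : ℕ} (xstar : Fin N → (Fin n → ℝ) → (Fin n → ℝ))
    (z : Fin N × Fin n → ℝ) : Fin N × Fin n → ℝ :=
  fun p => xstar p.1 (fun j => z (p.1, j)) p.2

/-- Extended aggregation map `A_ν(z) = (P^ν ⊗ I_n) x⋆(z)`. -/
def aggMap {n N : ℕ} (P : Matrix (Fin N) (Fin N) ℝ) (ν : ℕ)
    (xstar : Fin N → (Fin n → ℝ) → (Fin n → ℝ)) (z : Fin N × Fin n → ℝ) :
    Fin N × Fin n → ℝ :=
  ((P ^ ν) ⊗ₖ (1 : Matrix (Fin n) (Fin n) ℝ)).mulVec (extMap xstar z)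

/-- The matrix `(1/N)·1_N 1_Nᵀ` with all entries `1/N`. -/
def avgMat (N : ℕ) : Matrix (Fin N) (Fin N) ℝ := Matrix.of fun _ _ => (N : ℝ)⁻¹

/-- Mean-field aggregation map `A(z) = ((1/N)·1 1ᵀ ⊗ I_n) x⋆(z)`. -/
def meanAgg {n N : ℕ} (xstar : Fin N → (Fin n → ℝ) → (Fin n → ℝ))
    (z : Fin N × Fin n → ℝ) : Fin N × Fin n → ℝ :=
  ((avgMat N) ⊗ₖ (1 : Matrix (Fin n) (Fin n) ℝ)).mulVec (extMap xstar z)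

/-- Maximum-row-sum matrix norm `‖A‖_∞`. -/
def rowSumNorm {N : ℕ} (A : Matrix (Fin N) (Fin N) ℝ) : ℝ := ⨆ i, ∑ j, |A i j|

/-- Spectral norm (ℓ²-operator norm) of a real matrix. -/
def specNorm {ι : Type*} [Fintype ι] [DecidableEq ι] (P : Matrix ι ι ℝ) : ℝ :=
  ‖LinearMap.toContinuousLinearMap (Matrix.toEuclideanLin P)‖

/-- Map `A_{m,m}(z) = (P^m ⊗ I_n) x⋆((P^m ⊗ I_n) z)`. -/
def halfAgg {n N : ℕ} (P : Matrix (Fin N) (Fin N) ℝ) (m : ℕ)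
    (xstar : Fin N → (Fin n → ℝ) → (Fin n → ℝ)) (z : Fin N × Fin n → ℝ) :
    Fin N × Fin n → ℝ :=
  ((P ^ m) ⊗ₖ (1 : Matrix (Fin n) (Fin n) ℝ)).mulVec
    (extMap xstar (((P ^ m) ⊗ₖ (1 : Matrix (Fin n) (Fin n) ℝ)).mulVec z))

/-!
In the coordinates `Φ` with `⟪Φ u, Φ v⟫ = ∑ᵢ uᵢᵀ C vᵢ`, the first-order optimality condition of
each agent, together with `ε C ≤ Q`, makes `-x⋆` cocoercive with constant `δ = ε · minᵢ qᵢ`.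
Conjugating by `P^{ν/2} ⊗ I_n`, which is symmetric and (being doubly stochastic) nonexpansive,
preserves this, so `-A_{ν/2,ν/2}` is `δ`-cocoercive. For such a map a Mann step of size
`t ≤ δ / (1 + 2δ)` contracts distances by `1 - t`: Banach's theorem gives a fixed point `z`, and
`‖z_{k+1} - z‖ ≤ (1 - α_k) ‖z_k - z‖` for large `k`, which forces convergence since
`∑ α_k = ∞`. Finally `A_ν ((P^{ν/2} ⊗ I_n) z) = (P^{ν/2} ⊗ I_n) A_{ν/2,ν/2}(z) = (P^{ν/2} ⊗ I_n) z`.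
-/

theorem tendsto_zero_of_le_one_sub_mul {e α : ℕ → ℝ} (he : ∀ k, 0 ≤ e k)
    (hα : Tendsto (fun K => ∑ k ∈ range K, α k) atTop atTop)
    (h : ∀ᶠ k in atTop, e (k + 1) ≤ (1 - α k) * e k) : Tendsto e atTop (𝓝 0) := by
  obtain ⟨K, hK⟩ := eventually_atTop.1 h
  set S : ℕ → ℝ := fun k => ∑ j ∈ range k, α j
  have hbound : ∀ k ≥ K, e k ≤ e K * Real.exp (-(S k - S K)) := by
    intro k hk
    induction k, hk using Nat.le_induction with
    | base => simp
    | succ k hk ih =>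
      have hexp : 1 - α k ≤ Real.exp (-α k) := by linarith [Real.add_one_le_exp (-α k)]
      calc e (k + 1) ≤ (1 - α k) * e k := hK k hk
        _ ≤ Real.exp (-α k) * (e K * Real.exp (-(S k - S K))) :=
          mul_le_mul hexp ih (he k) (Real.exp_pos _).le
        _ = e K * Real.exp (-(S (k + 1) - S K)) := by
          rw [show S (k + 1) = S k + α k from sum_range_succ _ _, mul_left_comm, ← Real.exp_add]
          ring_nf
  have hlim : Tendsto (fun k => e K * Real.exp (-(S k - S K))) atTop (𝓝 0) := by
    have := (Real.tendsto_exp_neg_atTop_nhds_zero.comp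
      (tendsto_atTop_add_const_right _ (-S K) hα)).const_mul (e K)
    rw [mul_zero] at this
    exact this.congr fun k => by simp only [Function.comp_apply, sub_eq_add_neg]
  exact squeeze_zero' (Eventually.of_forall he) (eventually_atTop.2 ⟨K, hbound⟩) hlim

section NegCocoercive

variable {E : Type*} [NormedAddCommGroup E] [InnerProductSpace ℝ E]

/-- `-B` is `δ`-cocoercive. -/
def NegCocoercive (δ : ℝ) (B : E → E) : Prop :=
  ∀ x y, inner ℝ (B x - B y) (x - y) ≤ -(δ * ‖B x - B y‖ ^ 2)

variable {δ : ℝ} {B : E → E}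

theorem NegCocoercive.norm_mann_sub_le (hB : NegCocoercive δ B) (hδ : 0 ≤ δ) {t : ℝ}
    (ht : 0 ≤ t) (htδ : t ≤ δ / (1 + 2 * δ)) (x y : E) :
    ‖((1 - t) • x + t • B x) - ((1 - t) • y + t • B y)‖ ≤ (1 - t) * ‖x - y‖ := by
  rw [le_div_iff₀ (by linarith)] at htδ
  have ht1 : t ≤ 1 / 2 := by nlinarith
  have hsplit : ((1 - t) • x + t • B x) - ((1 - t) • y + t • B y) =
      (1 - t) • (x - y) + t • (B x - B y) := by
    simp only [smul_sub]; abel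
  rw [hsplit]
  refine le_of_pow_le_pow_left₀ two_ne_zero (mul_nonneg (by linarith) (norm_nonneg _)) ?_
  rw [norm_add_sq_real, norm_smul, norm_smul, real_inner_smul_left, real_inner_smul_right,
    Real.norm_of_nonneg (by linarith), Real.norm_of_nonneg ht, real_inner_comm]
  have hcross := mul_le_mul_of_nonneg_left (hB x y) (by nlinarith : 0 ≤ 2 * ((1 - t) * t))
  have hquad : t * (t * ‖B x - B y‖ ^ 2) ≤ 2 * δ * (1 - t) * (t * ‖B x - B y‖ ^ 2) :=
    mul_le_mul_of_nonneg_right (by linarith) (by positivity)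
  linarith

theorem NegCocoercive.exists_fixedPt [CompleteSpace E] (hB : NegCocoercive δ B) (hδ : 0 < δ) :
    ∃ z, B z = z := by
  set t := δ / (1 + 2 * δ)
  have ht0 : 0 < t := by positivity
  have ht1 : t < 1 := (div_lt_one (by positivity)).2 (by linarith)
  have hG : ContractingWith (1 - t).toNNReal (fun x => (1 - t) • x + t • B x) := by
    refine ⟨by simpa [Real.toNNReal_lt_one] using ht0, LipschitzWith.of_dist_le_mul fun x y => ?_⟩
    rw [dist_eq_norm, dist_eq_norm, Real.coe_toNNReal _ (by linarith)]
    exact hB.norm_mann_sub_le hδ.le ht0.le le_rfl x y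
  have : Nonempty E := ⟨0⟩
  refine ⟨hG.fixedPoint _, smul_right_injective E ht0.ne' ?_⟩
  have hfix : (1 - t) • hG.fixedPoint _ + t • B (hG.fixedPoint _) = hG.fixedPoint _ :=
    hG.fixedPoint_isFixedPt
  linear_combination (norm := module) hfix

theorem NegCocoercive.exists_fixedPt_tendsto_mann [CompleteSpace E] (hB : NegCocoercive δ B)
    (hδ : 0 < δ) {α : ℕ → ℝ} (hα0 : ∀ k, 0 ≤ α k) (hα : Tendsto α atTop (𝓝 0))
    (hαsum : Tendsto (fun K => ∑ k ∈ range K, α k) atTop atTop) {z : ℕ → E}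
    (hz : ∀ k, z (k + 1) = (1 - α k) • z k + α k • B (z k)) :
    ∃ z', B z' = z' ∧ Tendsto z atTop (𝓝 z') := by
  obtain ⟨z', hz'⟩ := hB.exists_fixedPt hδ
  refine ⟨z', hz', tendsto_iff_norm_sub_tendsto_zero.2 <|
    tendsto_zero_of_le_one_sub_mul (fun k => norm_nonneg _) hαsum ?_⟩
  filter_upwards [hα.eventually (ge_mem_nhds (by positivity : 0 < δ / (1 + 2 * δ)))] with k hk
  have hfix : z' = (1 - α k) • z' + α k • B z' := by rw [hz']; module
  calc ‖z (k + 1) - z'‖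
      = ‖((1 - α k) • z k + α k • B (z k)) - ((1 - α k) • z' + α k • B z')‖ := by
        rw [hz k, ← hfix]
    _ ≤ (1 - α k) * ‖z k - z'‖ := hB.norm_mann_sub_le hδ.le (hα0 k) hk _ _

theorem exists_fixedPt_tendsto_mann_of_equiv [CompleteSpace E] {F : Type*} [AddCommGroup F]
    [Module ℝ F] [TopologicalSpace F] (Φ : F ≃L[ℝ] E) {B : F → F}
    (hB : NegCocoercive δ (Φ ∘ B ∘ Φ.symm)) (hδ : 0 < δ) {α : ℕ → ℝ} (hα0 : ∀ k, 0 ≤ α k)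
    (hα : Tendsto α atTop (𝓝 0)) (hαsum : Tendsto (fun K => ∑ k ∈ range K, α k) atTop atTop)
    {z : ℕ → F} (hz : ∀ k, z (k + 1) = (1 - α k) • z k + α k • B (z k)) :
    ∃ z', B z' = z' ∧ Tendsto z atTop (𝓝 z') := by
  obtain ⟨y, hy, hlim⟩ := hB.exists_fixedPt_tendsto_mann hδ hα0 hα hαsum (z := Φ ∘ z)
    fun k => by simp [hz]
  refine ⟨Φ.symm y, Φ.injective ?_, by
    simpa [Function.comp_def] using (Φ.symm.continuous.tendsto y).comp hlim⟩
  simpa using hy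

theorem NegCocoercive.conj_of_isSymmetric (hX : NegCocoercive δ B) (hδ : 0 ≤ δ)
    {T : E →ₗ[ℝ] E} (hT : T.IsSymmetric) (hT1 : ∀ x, ‖T x‖ ≤ ‖x‖) :
    NegCocoercive δ (T ∘ B ∘ T) := by
  intro a b
  simp only [Function.comp_apply, ← map_sub]
  calc inner ℝ (T (B (T a) - B (T b))) (a - b) = inner ℝ (B (T a) - B (T b)) (T a - T b) := by
        rw [hT, map_sub]
    _ ≤ -(δ * ‖B (T a) - B (T b)‖ ^ 2) := hX _ _
    _ ≤ -(δ * ‖T (B (T a) - B (T b))‖ ^ 2) := by gcongr; exact hT1 _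

end NegCocoercive

section DoublyStochastic

variable {ι κ : Type*} [Fintype ι] [DecidableEq ι] [Fintype κ] [DecidableEq κ]

theorem Matrix.IsSymm.mem_doublyStochastic {R : Type*} [Semiring R] [PartialOrder R]
    [IsOrderedRing R] {P : Matrix ι ι R} (hP : P.IsSymm) (hnn : ∀ i j, 0 ≤ P i j)
    (hrow : ∀ i, ∑ j, P i j = 1) : P ∈ doublyStochastic R ι :=
  mem_doublyStochastic_iff_sum.2 ⟨hnn, hrow, fun j => by simpa [hP.apply] using hrow j⟩

theorem kronecker_mem_doublyStochastic {R : Type*} [CommSemiring R] [PartialOrder R]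
    [IsOrderedRing R] {A : Matrix ι ι R} {B : Matrix κ κ R} (hA : A ∈ doublyStochastic R ι)
    (hB : B ∈ doublyStochastic R κ) : A ⊗ₖ B ∈ doublyStochastic R (ι × κ) := by
  rw [mem_doublyStochastic_iff_sum] at hA hB ⊢
  refine ⟨fun i j => mul_nonneg (hA.1 _ _) (hB.1 _ _), fun i => ?_, fun j => ?_⟩
  · simp [Fintype.sum_prod_type, ← Finset.mul_sum, hA.2.1, hB.2.1]
  · simp [Fintype.sum_prod_type, ← Finset.mul_sum, hA.2.2, hB.2.2]

theorem norm_toEuclideanLin_le_of_mem_doublyStochastic {M : Matrix ι ι ℝ}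
    (hM : M ∈ doublyStochastic ℝ ι) (x : EuclideanSpace ℝ ι) : ‖M.toEuclideanLin x‖ ≤ ‖x‖ := by
  refine le_of_pow_le_pow_left₀ two_ne_zero (norm_nonneg _) ?_
  rw [EuclideanSpace.real_norm_sq_eq, EuclideanSpace.real_norm_sq_eq]
  have hjensen : ∀ i, (∑ j, M i j * x j) ^ 2 ≤ ∑ j, M i j * x j ^ 2 := fun i => by
    simpa using (even_two.convexOn_pow (𝕜 := ℝ)).map_sum_le (t := univ) (w := M i) (p := x)
      (fun j _ => nonneg_of_mem_doublyStochastic hM) (sum_row_of_mem_doublyStochastic hM i)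
      (fun _ _ => Set.mem_univ _)
  calc ∑ i, (M.toEuclideanLin x) i ^ 2 = ∑ i, (∑ j, M i j * x j) ^ 2 := rfl
    _ ≤ ∑ i, ∑ j, M i j * x j ^ 2 := sum_le_sum fun i _ => hjensen i
    _ = ∑ j, x j ^ 2 := by
      rw [sum_comm]
      simp [← sum_mul, sum_col_of_mem_doublyStochastic hM]

end DoublyStochastic

theorem exists_pos_forall_le {ι : Type*} [Finite ι] {q : ι → ℝ} (hq : ∀ i, 0 < q i) :
    ∃ m > 0, ∀ i, m ≤ q i := by
  rcases isEmpty_or_nonempty ι with hι | hι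
  · exact ⟨1, one_pos, fun i => isEmptyElim i⟩
  · obtain ⟨i, hi⟩ := Finite.exists_min q
    exact ⟨q i, hq i, hi⟩

section EuclideanCoord

variable {ι : Type*} [Fintype ι] [DecidableEq ι]

def euclideanCoord (A : Matrix ι ι ℝ) (hA : IsUnit A) : (ι → ℝ) ≃L[ℝ] EuclideanSpace ℝ ι :=
  (A.toLinearEquiv' hA.invertible).toContinuousLinearEquiv.trans (EuclideanSpace.equiv ι ℝ).symm

variable {A : Matrix ι ι ℝ} {hA : IsUnit A}

theorem euclideanCoord_apply (u : ι → ℝ) : euclideanCoord A hA u = WithLp.toLp 2 (A *ᵥ u) := rfl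

theorem inner_euclideanCoord (u v : ι → ℝ) :
    inner ℝ (euclideanCoord A hA u) (euclideanCoord A hA v) = u ⬝ᵥ (Aᵀ * A) *ᵥ v := by
  rw [euclideanCoord_apply, euclideanCoord_apply, EuclideanSpace.inner_toLp_toLp, star_trivial,
    ← mulVec_mulVec, dotProduct_mulVec, ← mulVec_transpose, dotProduct_comm]

theorem euclideanCoord_mulVec {M : Matrix ι ι ℝ} (h : Commute A M) (u : ι → ℝ) :
    euclideanCoord A hA (M *ᵥ u) = M.toEuclideanLin (euclideanCoord A hA u) := by
  simp [euclideanCoord_apply, mulVec_mulVec, h.eq]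

theorem Matrix.PosDef.exists_isUnit_eq_transpose_mul {M : Matrix ι ι ℝ} (hM : M.PosDef) :
    ∃ R, IsUnit R ∧ M = Rᵀ * R := by
  open scoped MatrixOrder in
  obtain ⟨R, hR⟩ := CStarAlgebra.nonneg_iff_eq_star_mul_self.1 hM.posSemidef.nonneg
  refine ⟨R, isUnit_of_mul_isUnit_right (hR ▸ hM.isUnit), ?_⟩
  simpa [star_eq_conjTranspose, conjTranspose_eq_transpose_of_trivial] using hR

theorem Matrix.PosDef.exists_pos_mul_dotProduct_mulVec_le {Q C : Matrix ι ι ℝ} (hQ : Q.PosDef)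
    (hC : C.PosDef) : ∃ ε > 0, ∀ v, ε * (v ⬝ᵥ C *ᵥ v) ≤ v ⬝ᵥ Q *ᵥ v := by
  obtain ⟨RQ, hRQ, rfl⟩ := hQ.exists_isUnit_eq_transpose_mul
  obtain ⟨RC, hRC, rfl⟩ := hC.exists_isUnit_eq_transpose_mul
  set ΦQ := euclideanCoord RQ hRQ
  set ΦC := euclideanCoord RC hRC
  obtain ⟨K, hK, hbound⟩ := (ΦC.toContinuousLinearMap.comp ΦQ.symm.toContinuousLinearMap).bound
  refine ⟨(K ^ 2)⁻¹, by positivity, fun v => ?_⟩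
  have hv : ‖ΦC v‖ ≤ K * ‖ΦQ v‖ := by simpa using hbound (ΦQ v)
  rw [← inner_euclideanCoord, ← inner_euclideanCoord, real_inner_self_eq_norm_sq,
    real_inner_self_eq_norm_sq, inv_mul_le_iff₀ (by positivity), ← mul_pow]
  exact pow_le_pow_left₀ (norm_nonneg _) hv 2

theorem Matrix.PosDef.exists_pos_forall_mul_le {κ : Type*} [Finite κ] {q : κ → ℝ}
    (hq : ∀ i, 0 < q i) {Q C : Matrix ι ι ℝ} (hQ : Q.PosDef) (hC : C.PosDef) :
    ∃ δ > 0, ∀ i v, δ * (v ⬝ᵥ C *ᵥ v) ≤ q i * (v ⬝ᵥ Q *ᵥ v) := by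
  obtain ⟨ε, hε, hQC⟩ := hQ.exists_pos_mul_dotProduct_mulVec_le hC
  obtain ⟨m, hm, hm_le⟩ := exists_pos_forall_le hq
  refine ⟨m * ε, by positivity, fun i v => ?_⟩
  have hQv : 0 ≤ v ⬝ᵥ Q *ᵥ v := by simpa using hQ.posSemidef.dotProduct_mulVec_nonneg v
  calc m * ε * (v ⬝ᵥ C *ᵥ v) = m * (ε * (v ⬝ᵥ C *ᵥ v)) := mul_assoc _ _ _
    _ ≤ m * (v ⬝ᵥ Q *ᵥ v) := mul_le_mul_of_nonneg_left (hQC v) hm.le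
    _ ≤ q i * (v ⬝ᵥ Q *ᵥ v) := mul_le_mul_of_nonneg_right (hm_le i) hQv

end EuclideanCoord

section BlockCoord

variable {ι κ : Type*} [Fintype ι] [DecidableEq ι] [Fintype κ]

theorem dotProduct_one_kronecker_mulVec {α : Type*} [CommSemiring α] (C : Matrix κ κ α)
    (u v : ι × κ → α) :
    u ⬝ᵥ ((1 : Matrix ι ι α) ⊗ₖ C) *ᵥ v = ∑ i, Function.curry u i ⬝ᵥ C *ᵥ Function.curry v i := by
  simp [dotProduct, mulVec, Fintype.sum_prod_type, one_apply, ite_mul, Function.curry]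

theorem Matrix.PosDef.exists_blockCoord [DecidableEq κ] {C : Matrix κ κ ℝ} (hC : C.PosDef) :
    ∃ Φ : (ι × κ → ℝ) ≃L[ℝ] EuclideanSpace ℝ (ι × κ),
      (∀ u v, inner ℝ (Φ u) (Φ v) = ∑ i, Function.curry u i ⬝ᵥ C *ᵥ Function.curry v i) ∧
      ∀ (S : Matrix ι ι ℝ) u, Φ ((S ⊗ₖ 1) *ᵥ u) = (S ⊗ₖ 1).toEuclideanLin (Φ u) := by
  obtain ⟨R, hR, rfl⟩ := hC.exists_isUnit_eq_transpose_mul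
  refine ⟨euclideanCoord ((1 : Matrix ι ι ℝ) ⊗ₖ R) (isUnit_one.kronecker hR), fun u v => ?_,
    fun S u => euclideanCoord_mulVec ?_ u⟩
  · rw [inner_euclideanCoord, ← kroneckerMap_transpose, ← mul_kronecker_mul, transpose_one,
      one_mul, dotProduct_one_kronecker_mulVec]
  · simp [Commute, SemiconjBy, ← mul_kronecker_mul]

end BlockCoord

section OptimalResponse

variable {n : ℕ} {Q C : Matrix (Fin n) (Fin n) ℝ} {qi : ℝ} {ci : Fin n → ℝ}

theorem cost_add_smul (x d z : Fin n → ℝ) (t : ℝ) :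
    cost Q C qi ci (x + t • d) z = cost Q C qi ci x z +
      t * (qi * (x ⬝ᵥ Q *ᵥ d + d ⬝ᵥ Q *ᵥ x) + 2 * ((C *ᵥ z + ci) ⬝ᵥ d)) +
      t ^ 2 * (qi * (d ⬝ᵥ Q *ᵥ d)) := by
  simp only [cost, mulVec_add, mulVec_smul, dotProduct_add, add_dotProduct, dotProduct_smul,
    smul_dotProduct, smul_eq_mul]
  ring

variable {X : Set (Fin n → ℝ)} {xst : (Fin n → ℝ) → Fin n → ℝ}

theorem IsOptResp.variational_ineq (hopt : IsOptResp X Q C qi ci xst) (hX : Convex ℝ X)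
    (z : Fin n → ℝ) {y : Fin n → ℝ} (hy : y ∈ X) :
    0 ≤ qi * (xst z ⬝ᵥ Q *ᵥ (y - xst z) + (y - xst z) ⬝ᵥ Q *ᵥ xst z) +
      2 * ((C *ᵥ z + ci) ⬝ᵥ (y - xst z)) := by
  set g := qi * (xst z ⬝ᵥ Q *ᵥ (y - xst z) + (y - xst z) ⬝ᵥ Q *ᵥ xst z) +
      2 * ((C *ᵥ z + ci) ⬝ᵥ (y - xst z))
  set M := qi * ((y - xst z) ⬝ᵥ Q *ᵥ (y - xst z))
  have hlim : Tendsto (fun t : ℝ => g + t * M) (𝓝[>] 0) (𝓝 g) := by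
    refine ((show Continuous fun t : ℝ => g + t * M by fun_prop).tendsto' 0 g ?_).mono_left
      nhdsWithin_le_nhds
    simp
  refine ge_of_tendsto hlim ?_
  filter_upwards [Ioc_mem_nhdsGT one_pos] with t ⟨ht0, ht1⟩
  have hmin := (hopt z).2 _ (hX.add_smul_sub_mem (hopt z).1 hy ⟨ht0.le, ht1⟩)
  rw [cost_add_smul] at hmin
  exact nonneg_of_mul_nonneg_right (by linear_combination hmin) ht0

theorem IsOptResp.dotProduct_mulVec_sub_le (hopt : IsOptResp X Q C qi ci xst)
    (hX : Convex ℝ X) (w₁ w₂ : Fin n → ℝ) :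
    (xst w₁ - xst w₂) ⬝ᵥ C *ᵥ (w₁ - w₂) ≤
      -(qi * ((xst w₁ - xst w₂) ⬝ᵥ Q *ᵥ (xst w₁ - xst w₂))) := by
  have h₁ := hopt.variational_ineq hX w₁ (hopt w₂).1
  have h₂ := hopt.variational_ineq hX w₂ (hopt w₁).1
  rw [dotProduct_comm]
  simp only [mulVec_sub, dotProduct_sub, sub_dotProduct, add_dotProduct] at h₁ h₂ ⊢
  linear_combination (h₁ + h₂) / 2

end OptimalResponse

section Aggregation

variable {N n : ℕ} {C : Matrix (Fin n) (Fin n) ℝ} {xstar : Fin N → (Fin n → ℝ) → Fin n → ℝ}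
  {δ : ℝ}

theorem negCocoercive_extMap {H : Type*} [NormedAddCommGroup H] [InnerProductSpace ℝ H]
    (Φ : (Fin N × Fin n → ℝ) ≃L[ℝ] H)
    (hΦ : ∀ u v, inner ℝ (Φ u) (Φ v) = ∑ i, Function.curry u i ⬝ᵥ C *ᵥ Function.curry v i)
    (hx : ∀ i w₁ w₂, (xstar i w₁ - xstar i w₂) ⬝ᵥ C *ᵥ (w₁ - w₂) ≤
      -(δ * ((xstar i w₁ - xstar i w₂) ⬝ᵥ C *ᵥ (xstar i w₁ - xstar i w₂)))) :
    NegCocoercive δ (Φ ∘ extMap xstar ∘ Φ.symm) := by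
  intro a b
  obtain ⟨u, rfl⟩ := Φ.surjective a
  obtain ⟨v, rfl⟩ := Φ.surjective b
  simp only [Function.comp_apply, ContinuousLinearEquiv.symm_apply_apply, ← map_sub,
    ← real_inner_self_eq_norm_sq, hΦ, mul_sum, ← sum_neg_distrib]
  exact sum_le_sum fun i _ => hx i (Function.curry u i) (Function.curry v i)

theorem negCocoercive_halfAgg {P : Matrix (Fin N) (Fin N) ℝ} (hP : P ∈ doublyStochastic ℝ (Fin N))
    (hPsym : P.IsSymm) (m : ℕ) (Φ : (Fin N × Fin n → ℝ) ≃L[ℝ] EuclideanSpace ℝ (Fin N × Fin n))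
    (hΦ : ∀ u v, inner ℝ (Φ u) (Φ v) = ∑ i, Function.curry u i ⬝ᵥ C *ᵥ Function.curry v i)
    (hΦK : ∀ u, Φ (((P ^ m) ⊗ₖ (1 : Matrix (Fin n) (Fin n) ℝ)) *ᵥ u) =
      ((P ^ m) ⊗ₖ (1 : Matrix (Fin n) (Fin n) ℝ)).toEuclideanLin (Φ u))
    (hδ : 0 ≤ δ)
    (hx : ∀ i w₁ w₂, (xstar i w₁ - xstar i w₂) ⬝ᵥ C *ᵥ (w₁ - w₂) ≤
      -(δ * ((xstar i w₁ - xstar i w₂) ⬝ᵥ C *ᵥ (xstar i w₁ - xstar i w₂)))) :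
    NegCocoercive δ (Φ ∘ halfAgg P m xstar ∘ Φ.symm) := by
  have hKds : (P ^ m) ⊗ₖ (1 : Matrix (Fin n) (Fin n) ℝ) ∈ doublyStochastic ℝ (Fin N × Fin n) :=
    kronecker_mem_doublyStochastic (pow_mem hP m) (one_mem _)
  have hKsymm : ((P ^ m) ⊗ₖ (1 : Matrix (Fin n) (Fin n) ℝ)).toEuclideanLin.IsSymmetric := by
    refine isSymmetric_toEuclideanLin_iff.2 (isHermitian_iff_isSymm.2 ?_)
    rw [IsSymm, ← kroneckerMap_transpose, (hPsym.pow m).eq, transpose_one]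
  convert (negCocoercive_extMap Φ hΦ hx).conj_of_isSymmetric hδ hKsymm
    (norm_toEuclideanLin_le_of_mem_doublyStochastic hKds) using 1
  funext y
  obtain ⟨u, rfl⟩ := Φ.surjective y
  simp only [Function.comp_apply, ← hΦK, ContinuousLinearEquiv.symm_apply_apply]
  rfl

theorem aggMap_mulVec_eq_of_halfAgg_eq {P : Matrix (Fin N) (Fin N) ℝ} {ν : ℕ} (hν : Even ν)
    {z : Fin N × Fin n → ℝ} (hz : halfAgg P (ν / 2) xstar z = z) :
    aggMap P ν xstar (((P ^ (ν / 2)) ⊗ₖ (1 : Matrix (Fin n) (Fin n) ℝ)) *ᵥ z) =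
      ((P ^ (ν / 2)) ⊗ₖ (1 : Matrix (Fin n) (Fin n) ℝ)) *ᵥ z := by
  have hPν : (P ^ ν) ⊗ₖ (1 : Matrix (Fin n) (Fin n) ℝ) =
      ((P ^ (ν / 2)) ⊗ₖ 1) * ((P ^ (ν / 2)) ⊗ₖ (1 : Matrix (Fin n) (Fin n) ℝ)) := by
    rw [← mul_kronecker_mul, one_mul, ← pow_add, ← two_mul, Nat.two_mul_div_two_of_even hν]
  rw [aggMap, hPν, ← mulVec_mulVec]
  exact congrArg _ hz

end Aggregation

theorem mann_halfAgg_converges_general {n N ν : ℕ}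
    (hνeven : Even ν)
    (X : Fin N → Set (Fin n → ℝ))
    (hXconv : ∀ i, Convex ℝ (X i))
    (Q C : Matrix (Fin n) (Fin n) ℝ) (hQ : Q.PosDef)
    (q : Fin N → ℝ) (hq : ∀ i, 0 < q i) (c : Fin N → Fin n → ℝ)
    (P : Matrix (Fin N) (Fin N) ℝ) (hPnn : ∀ i j, 0 ≤ P i j)
    (hPrs : ∀ i, ∑ j, P i j = 1) (hPsym : P.IsSymm)
    (hC : C.PosDef)
    (α : ℕ → ℝ) (hα1 : ∀ k, 0 < α k ∧ α k < 1)
    (hα2 : Tendsto α atTop (𝓝 0))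
    (hα3 : Tendsto (fun K => ∑ k ∈ Finset.range K, α k) atTop atTop)
    (xstar : Fin N → (Fin n → ℝ) → (Fin n → ℝ))
    (hxstar : ∀ i, IsOptResp (X i) Q C (q i) (c i) (xstar i))
    (zseq : ℕ → (Fin N × Fin n → ℝ))
    (hrec : ∀ k, zseq (k + 1) =
      (1 - α k) • zseq k + α k • halfAgg P (ν / 2) xstar (zseq k)) :
    ∃ a : Fin N × Fin n → ℝ,
      aggMap P ν xstar a = a ∧
      Tendsto
        (fun k => ((P ^ (ν / 2)) ⊗ₖ (1 : Matrix (Fin n) (Fin n) ℝ)).mulVec (zseq k))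
        atTop (𝓝 a) := by
  obtain ⟨Φ, hΦ, hΦK⟩ := hC.exists_blockCoord (ι := Fin N)
  obtain ⟨δ, hδ, hQC⟩ := hQ.exists_pos_forall_mul_le hq hC
  have hB := negCocoercive_halfAgg (hPsym.mem_doublyStochastic hPnn hPrs) hPsym (ν / 2) Φ hΦ
    (hΦK _) hδ.le fun i w₁ w₂ =>
      ((hxstar i).dotProduct_mulVec_sub_le (hXconv i) w₁ w₂).trans (neg_le_neg (hQC i _))
  obtain ⟨z, hz, hlim⟩ := exists_fixedPt_tendsto_mann_of_equiv Φ hB hδ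
    (fun k => (hα1 k).1.le) hα2 hα3 hrec
  exact ⟨_, aggMap_mulVec_eq_of_halfAgg_eq hνeven hz,
    ((continuous_const.matrix_mulVec continuous_id).tendsto z).comp hlim⟩

/-- Theorem 3, case 4: if `ν` is even, `P = Pᵀ` and `C ≻ 0`, then the Mann
iteration of `A_{ν/2,ν/2}` produces estimates `(P^{ν/2} ⊗ I_n) z_k` converging to a fixed
point of `A_ν`. -/
theorem mann_halfAgg_converges {n N ν : ℕ} (hn : 0 < n) (hN : 0 < N) (hν : 0 < ν)
    (hνeven : Even ν)
    (X : Fin N → Set (Fin n → ℝ))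
    (hXne : ∀ i, (X i).Nonempty) (hXconv : ∀ i, Convex ℝ (X i))
    (hXcpt : ∀ i, IsCompact (X i))
    (Q C : Matrix (Fin n) (Fin n) ℝ) (hQ : Q.PosDef)
    (q : Fin N → ℝ) (hq : ∀ i, 0 < q i) (c : Fin N → Fin n → ℝ)
    (P : Matrix (Fin N) (Fin N) ℝ) (hPnn : ∀ i j, 0 ≤ P i j)
    (hPrs : ∀ i, ∑ j, P i j = 1) (hPsym : P.IsSymm)
    (hC : C.PosDef)
    (α : ℕ → ℝ) (hα1 : ∀ k, 0 < α k ∧ α k < 1)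
    (hα2 : Tendsto α atTop (𝓝 0))
    (hα3 : Tendsto (fun K => ∑ k ∈ Finset.range K, α k) atTop atTop)
    (xstar : Fin N → (Fin n → ℝ) → (Fin n → ℝ))
    (hxstar : ∀ i, IsOptResp (X i) Q C (q i) (c i) (xstar i))
    (zseq : ℕ → (Fin N × Fin n → ℝ))
    (hrec : ∀ k, zseq (k + 1) =
      (1 - α k) • zseq k + α k • halfAgg P (ν / 2) xstar (zseq k)) :
    ∃ a : Fin N × Fin n → ℝ,
      aggMap P ν xstar a = a ∧
      Tendsto
        (fun k => ((P ^ (ν / 2)) ⊗ₖ (1 : Matrix (Fin n) (Fin n) ℝ)).mulVec (zseq k))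
        atTop (𝓝 a) :=
  mann_halfAgg_converges_general hνeven X hXconv Q C hQ q hq c P hPnn hPrs hPsym hC α hα1 hα2 hα3
    xstar hxstar zseq hrec
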